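/- Let p be prime, n a positive integer, and Q ∈ ℤ[X₁,...,Xₙ] a quadratic form. Then R(ℕ ∩ Q(ℤ^n)) is dense in ℚ_p if and only if R(Q(ℤ^n)) is dense in ℚ_p and Q(ℤ^n) contains a positive integer. -/

import Mathlib

/-!
If `Q v > 0`, then for `t` a large multiple of `p ^ k` the value `Q (u + t • v)` is positive and
congruent to `Q u` modulo `p ^ k`. So every value of `Q` is a `p`-adic limit of positive values,
and since division is continuous away from `0`, the quotients of positive values are dense as
soon as all quotients of values are. Conversely, a dense quotient set needs a nonzero, hence
positive, denominator.
-/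

def quotSet {K : Type*} [DivisionRing K] (A : Set K) : Set K :=
  {x | ∃ a ∈ A, ∃ b ∈ A, b ≠ 0 ∧ x = a / b}

section quotSet

variable {K : Type*} [DivisionRing K]

lemma quotSet_mono {A B : Set K} (h : A ⊆ B) : quotSet A ⊆ quotSet B := by
  rintro x ⟨a, ha, b, hb, hb0, rfl⟩
  exact ⟨a, h ha, b, h hb, hb0, rfl⟩

variable [TopologicalSpace K] [ContinuousInv₀ K] [ContinuousMul K] [T1Space K]

lemma div_mem_closure_quotSet {A : Set K} {a b : K} (ha : a ∈ closure A) (hb : b ∈ closure A)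
    (hb0 : b ≠ 0) : a / b ∈ closure (quotSet A) := by
  have hb' : b ∈ closure ({0}ᶜ ∩ A) := isOpen_compl_singleton.inter_closure ⟨hb0, hb⟩
  have hab : (a, b) ∈ closure (A ×ˢ ({0}ᶜ ∩ A)) := by
    rw [closure_prod_eq]
    exact ⟨ha, hb'⟩
  have hdiv : ContinuousAt (fun z : K × K ↦ z.1 / z.2) (a, b) :=
    continuousAt_fst.div continuousAt_snd hb0
  refine closure_mono ?_ (mem_closure_image hdiv hab :)
  rintro _ ⟨⟨x, y⟩, ⟨hx, hy0, hy⟩, rfl⟩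
  exact ⟨x, hx, y, hy, hy0, rfl⟩

lemma Dense.quotSet_of_subset_closure {A B : Set K} (hB : Dense (quotSet B))
    (hBA : B ⊆ closure A) : Dense (quotSet A) :=
  dense_closure.mp <| hB.mono <| by
    rintro _ ⟨a, ha, b, hb, hb0, rfl⟩
    exact div_mem_closure_quotSet (hBA ha) (hBA hb) hb0

end quotSet

namespace QuadraticMap

variable {R M : Type*} [CommRing R] [AddCommGroup M] [Module R M]

lemma map_add_smul (Q : QuadraticMap R M R) (x y : M) (t : R) :
    Q (x + t • y) = Q x + t * polar Q x y + t ^ 2 * Q y := by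
  rw [QuadraticMap.map_add Q, QuadraticMap.map_smul, polar_smul_right, smul_eq_mul, smul_eq_mul]
  ring

lemma dvd_map_add_smul_sub (Q : QuadraticMap R M R) (x y : M) (t : R) :
    t ∣ Q (x + t • y) - Q x :=
  ⟨polar Q x y + t * Q y, by rw [map_add_smul]; ring⟩

lemma map_add_smul_pos {M : Type*} [AddCommGroup M] (Q : QuadraticForm ℤ M)
    {x y : M} (hy : 0 < Q y) {t : ℤ} (ht : |Q x| + |polar Q x y| + 1 ≤ t) :
    0 < Q (x + t • y) := by
  rw [map_add_smul]
  have ht1 : 1 ≤ t := by linarith [abs_nonneg (Q x), abs_nonneg (polar Q x y)]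
  have hquad : t * t ≤ t ^ 2 * Q y := by nlinarith
  have hlin : -(t * |polar Q x y|) ≤ t * polar Q x y := by
    nlinarith [neg_abs_le (polar Q x y)]
  nlinarith [neg_abs_le (Q x), abs_nonneg (Q x)]

end QuadraticMap

lemma intCast_mem_closure_pos_values (p : ℕ) [Fact p.Prime] {M : Type*} [AddCommGroup M]
    (Q : QuadraticForm ℤ M) {v : M} (hv : 0 < Q v) (u : M) :
    ((Q u : ℤ) : ℚ_[p]) ∈ closure {y : ℚ_[p] | ∃ w : M, 0 < Q w ∧ ((Q w : ℤ) : ℚ_[p]) = y} := by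
  have hp : (1 : ℝ) < p := by exact_mod_cast (Fact.out : p.Prime).one_lt
  rw [Metric.mem_closure_iff]
  intro ε hε
  obtain ⟨k, hk⟩ : ∃ k : ℕ, (p : ℝ) ^ (-k : ℤ) < ε := by
    simpa using exists_pow_lt_of_lt_one hε (inv_lt_one_of_one_lt₀ hp)
  set t : ℤ := p ^ k * (|Q u| + |QuadraticMap.polar Q u v| + 1)
  have ht : |Q u| + |QuadraticMap.polar Q u v| + 1 ≤ t :=
    le_mul_of_one_le_left (by positivity) (one_le_pow₀ (by exact_mod_cast hp.le))
  refine ⟨_, ⟨u + t • v, Q.map_add_smul_pos hv ht, rfl⟩, ?_⟩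
  have hdvd : (p ^ k : ℤ) ∣ Q u - Q (u + t • v) :=
    (dvd_mul_right _ _).trans (dvd_sub_comm.mp (Q.dvd_map_add_smul_sub u v t))
  rw [dist_eq_norm, ← Int.cast_sub]
  exact ((Padic.norm_int_le_pow_iff_dvd _ _).mpr hdvd).trans_lt hk

theorem stmt17_general (p : ℕ) [Fact p.Prime] (n : ℕ)
    (Q : QuadraticForm ℤ (Fin n → ℤ)) :
    Dense (quotSet {y : ℚ_[p] | ∃ v : Fin n → ℤ, 0 ≤ Q v ∧ ((Q v : ℤ) : ℚ_[p]) = y}) ↔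
    (Dense (quotSet {y : ℚ_[p] | ∃ v : Fin n → ℤ, ((Q v : ℤ) : ℚ_[p]) = y}) ∧
      ∃ v : Fin n → ℤ, 0 < Q v) := by
  constructor
  · intro h
    refine ⟨h.mono (quotSet_mono ?_), ?_⟩
    · rintro y ⟨v, -, hv⟩
      exact ⟨v, hv⟩
    obtain ⟨-, -, -, -, ⟨w, hw, rfl⟩, hw0, -⟩ := h.nonempty
    exact ⟨w, hw.lt_of_ne fun h ↦ hw0 (by rw [← h, Int.cast_zero])⟩
  · rintro ⟨hd, v, hv⟩
    refine hd.quotSet_of_subset_closure ?_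
    rintro _ ⟨u, rfl⟩
    refine closure_mono ?_ (intCast_mem_closure_pos_values p Q hv u)
    rintro y ⟨w, hw, hy⟩
    exact ⟨w, hw.le, hy⟩

theorem stmt17 (p : ℕ) [Fact p.Prime] (n : ℕ) (hn : 0 < n)
    (Q : QuadraticForm ℤ (Fin n → ℤ)) :
    Dense (quotSet {y : ℚ_[p] | ∃ v : Fin n → ℤ, 0 ≤ Q v ∧ ((Q v : ℤ) : ℚ_[p]) = y}) ↔
    (Dense (quotSet {y : ℚ_[p] | ∃ v : Fin n → ℤ, ((Q v : ℤ) : ℚ_[p]) = y}) ∧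
      ∃ v : Fin n → ℤ, 0 < Q v) :=
  stmt17_general p n Q
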